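/- The function F(κ) = E_k(κ)/E_{k-1}(κ) is concave on Γ_k^+, and it is inverse concave, i.e. the function F_*(κ_1,…,κ_n) = F(κ_1^{-1},…,κ_n^{-1})^{-1} is concave on the set where all κ_i > 0 and (κ_1^{-1},…,κ_n^{-1}) ∈ Γ_k^+. -/

import Mathlib

/-- The normalized `k`-th elementary symmetric function of `κ ∈ ℝⁿ`. -/
noncomputable def Esym (n k : ℕ) (κ : Fin n → ℝ) : ℝ :=
  ((n.choose k : ℝ))⁻¹ * ∑ s ∈ Finset.univ.powersetCard k, ∏ i ∈ s, κ i

/-- The positive cone `Γ_k^+`. -/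
def GammaPlus (n k : ℕ) : Set (Fin n → ℝ) :=
  {x | ∀ i : ℕ, 1 ≤ i → i ≤ k → 0 < Esym n i x}

/-- The curvature quotient `F = E_k / E_{k-1}`. -/
noncomputable def Fquot (n k : ℕ) (κ : Fin n → ℝ) : ℝ :=
  Esym n k κ / Esym n (k - 1) κ

/-!
Write `S_j` for the unnormalised elementary symmetric functions, so that `F` is a positive
multiple of `S_k / S_{k-1}`. This ratio is homogeneous of degree one, so its concavity on `Γ_k`
amounts to superadditivity (Marcus–Lopes), proved by induction on `k`. Euler's relation gives
`k S_k(z) / S_{k-1}(z) = ∑ᵢ φ(zᵢ, qᵢ(z))`, where `qᵢ` is the ratio `S_{k-1} / S_{k-2}` of `z` with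
its `i`-th coordinate deleted and `φ(a, b) = a b / (a + b)` is the parallel sum. The parallel sum
is jointly superadditive and increasing in `b`, and each `qᵢ` is superadditive by induction, since
deleting a coordinate maps `Γ_k` into `Γ_{k-1}`. That last fact comes from moving `z` along
`(1, …, 1)`, which preserves `Γ_k`, and from Newton's inequalities, which hold because the
polynomial `∏ (X + zᵢ)` and its derivatives are real-rooted.

For inverse concavity, `S_j(κ⁻¹) = S_{n-j}(κ) / ∏ κᵢ` makes `F_*(κ)` a positive multiple of
`S_{n-k+1}(κ) / S_{n-k}(κ)`, and the positive orthant lies in `Γ_{n-k+1}`.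
-/

open Finset Polynomial

namespace Multiset

theorem esymm_cons {R : Type*} [CommSemiring R] (a : R) (s : Multiset R) (k : ℕ) :
    (a ::ₘ s).esymm (k + 1) = s.esymm (k + 1) + a * s.esymm k := by
  simp [esymm, powersetCard_cons, sum_map_mul_left]

theorem esymm_of_card_lt {R : Type*} [CommSemiring R] {s : Multiset R} {k : ℕ}
    (h : card s < k) : s.esymm k = 0 := by
  simp [esymm, powersetCard_eq_empty _ h]

theorem two_mul_esymm_mul_esymm_le_sq (s : Multiset ℝ) {k : ℕ} (hs : card s = k + 2) :
    2 * s.esymm (k + 2) * s.esymm k ≤ s.esymm (k + 1) ^ 2 := by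
  induction s using Multiset.induction_on generalizing k with
  | empty => simp at hs
  | cons a s ih =>
    rw [card_cons] at hs
    have htop : s.esymm (k + 2) = 0 := esymm_of_card_lt (by omega)
    rcases k with _ | k
    · rw [esymm_cons, esymm_cons, htop]
      simp only [esymm, powersetCard_zero_left, map_singleton, prod_zero, sum_singleton]
      nlinarith [sq_nonneg (s.esymm 1), sq_nonneg a]
    · have := ih (k := k) (by omega)
      rw [esymm_cons, esymm_cons, esymm_cons, htop]
      -- the sides differ by `E² + a² (F² - 2 E G)`, where `E, F, G = s.esymm (k + 2), (k + 1), k`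
      nlinarith [sq_nonneg (s.esymm (k + 2)), mul_nonneg (sq_nonneg a) (sub_nonneg.2 this)]

end Multiset

namespace Polynomial

theorem Splits.derivative_real {p : ℝ[X]} (hp : p.Splits) : p.derivative.Splits := by
  rw [splits_iff_card_roots] at hp ⊢
  have := card_roots_le_derivative p
  have := card_roots' p.derivative
  rw [natDegree_derivative] at *
  omega

theorem Splits.iterate_derivative_real {p : ℝ[X]} (hp : p.Splits) (m : ℕ) :
    (derivative^[m] p).Splits := by
  induction m with
  | zero => exact hp
  | succ m ih => rw [Function.iterate_succ_apply']; exact ih.derivative_real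

theorem Splits.two_mul_coeff_zero_mul_coeff_two_le {q : ℝ[X]} (hq : q.Splits) :
    2 * q.coeff 0 * q.coeff 2 ≤ q.coeff 1 ^ 2 := by
  obtain hd | ⟨k, hk⟩ : q.natDegree < 2 ∨ ∃ k, q.natDegree = k + 2 :=
    (lt_or_ge _ 2).imp id fun h => ⟨_, (Nat.sub_add_cancel h).symm⟩
  · rw [coeff_eq_zero_of_natDegree_lt hd]
    nlinarith [sq_nonneg (q.coeff 1)]
  have hcard : Multiset.card q.roots = k + 2 := by rw [← hq.natDegree_eq_card_roots, hk]
  rw [coeff_eq_esymm_roots_of_splits hq (by omega), coeff_eq_esymm_roots_of_splits hq (by omega),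
    coeff_eq_esymm_roots_of_splits hq (by omega), hk]
  simp only [show k + 2 - 0 = k + 2 by omega, show k + 2 - 1 = k + 1 by omega,
    show k + 2 - 2 = k by omega]
  have hsign : ((-1 : ℝ) ^ k) ^ 2 = 1 := by
    rw [← pow_mul, mul_comm, pow_mul, neg_one_sq, one_pow]
  calc _ = q.leadingCoeff ^ 2 * ((-1) ^ k) ^ 2 *
        (2 * q.roots.esymm (k + 2) * q.roots.esymm k) := by ring
    _ ≤ q.leadingCoeff ^ 2 * ((-1) ^ k) ^ 2 * q.roots.esymm (k + 1) ^ 2 := by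
        rw [hsign, mul_one]
        exact mul_le_mul_of_nonneg_left (q.roots.two_mul_esymm_mul_esymm_le_sq hcard)
          (sq_nonneg _)
    _ = _ := by ring

end Polynomial

section ElementarySymmetric

variable {ι : Type*} {A : Finset ι} {k : ℕ} {z : ι → ℝ}

noncomputable def elemSym (A : Finset ι) (k : ℕ) (z : ι → ℝ) : ℝ :=
  ∑ s ∈ A.powersetCard k, ∏ i ∈ s, z i

theorem elemSym_eq_esymm (A : Finset ι) (k : ℕ) (z : ι → ℝ) :
    elemSym A k z = (A.val.map z).esymm k :=
  (Finset.esymm_map_val z A k).symm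

@[simp]
theorem elemSym_zero (A : Finset ι) (z : ι → ℝ) : elemSym A 0 z = 1 := by
  simp [elemSym]

theorem elemSym_of_card_lt (h : #A < k) (z : ι → ℝ) : elemSym A k z = 0 := by
  rw [elemSym, powersetCard_eq_empty.2 h, sum_empty]

theorem elemSym_one (A : Finset ι) (z : ι → ℝ) : elemSym A 1 z = ∑ i ∈ A, z i := by
  simp [elemSym, powersetCard_one]

theorem elemSym_pos (hk : k ≤ #A) (hz : ∀ i ∈ A, 0 < z i) : 0 < elemSym A k z :=
  sum_pos (fun _ hs => prod_pos fun i hi => hz i ((mem_powersetCard.1 hs).1 hi))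
    (powersetCard_nonempty.2 hk)

theorem elemSym_smul (c : ℝ) (A : Finset ι) (k : ℕ) (z : ι → ℝ) :
    elemSym A k (c • z) = c ^ k * elemSym A k z := by
  rw [elemSym, elemSym, mul_sum]
  refine sum_congr rfl fun s hs => ?_
  simp [prod_mul_distrib, (mem_powersetCard.1 hs).2]

theorem continuous_elemSym (A : Finset ι) (k : ℕ) : Continuous (elemSym A k) := by
  unfold elemSym
  fun_prop

theorem prod_X_add_C_eq_sum_elemSym (A : Finset ι) (z : ι → ℝ) :
    ∏ i ∈ A, (X + C (z i)) = ∑ m ∈ range (#A + 1), C (elemSym A m z) * X ^ (#A - m) := by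
  simpa [elemSym_eq_esymm, Multiset.map_map, Function.comp_def] using
    (A.val.map z).prod_X_add_C_eq_sum_esymm

theorem elemSym_add_const (hk : k ≤ #A) (z : ι → ℝ) (s : ℝ) :
    elemSym A k (fun i => z i + s) =
      ∑ m ∈ range (k + 1), ((#A - m).choose (k - m) : ℝ) * s ^ (k - m) * elemSym A m z := by
  have hcomp : ∏ i ∈ A, (X + C (z i + s)) = (∏ i ∈ A, (X + C (z i))).comp (X + C s) := by
    simp only [Polynomial.prod_comp, add_comp, X_comp, C_comp, C_add]
    exact prod_congr rfl fun _ _ => by ring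
  have hcoeff :
      elemSym A k (fun i => z i + s) = (∏ i ∈ A, (X + C (z i + s))).coeff (#A - k) := by
    rw [prod_X_add_C_coeff _ _ (Nat.sub_le _ _), Nat.sub_sub_self hk]
    rfl
  rw [hcoeff, hcomp, prod_X_add_C_eq_sum_elemSym]
  simp only [Polynomial.sum_comp, mul_comp, C_comp, X_pow_comp, finsetSum_coeff, coeff_C_mul,
    coeff_X_add_C_pow]
  rw [← sum_subset (range_subset_range.2 (by omega : k + 1 ≤ #A + 1))]
  · refine sum_congr rfl fun m hm => ?_
    rw [mem_range] at hm
    rw [Nat.choose_symm_of_eq_add (show #A - m = (#A - k) + (k - m) by omega),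
      show #A - m - (#A - k) = k - m by omega]
    ring
  · intro m hmA hm
    rw [mem_range] at hmA hm
    rw [Nat.choose_eq_zero_of_lt (by omega), Nat.cast_zero, mul_zero, mul_zero]

/-- The three lowest coefficients of the `(#A - k - 2)`-th derivative of the real-rooted
polynomial `∏ (X + C (z i))` are positive multiples of `elemSym A (k + 2 - j) z`, `j = 0, 1, 2`. -/
theorem elemSym_add_two_mul_elemSym_nonpos (h : elemSym A (k + 1) z = 0) :
    elemSym A (k + 2) z * elemSym A k z ≤ 0 := by
  obtain hA | hA := lt_or_ge #A (k + 2)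
  · rw [elemSym_of_card_lt hA, zero_mul]
  set m := #A - (k + 2)
  have hcoeff : ∀ j ≤ k + 2, (derivative^[m] (∏ i ∈ A, (X + C (z i)))).coeff j =
      ((j + m).descFactorial m : ℝ) * elemSym A (k + 2 - j) z := by
    intro j hj
    rw [coeff_iterate_derivative, prod_X_add_C_coeff _ _ (by omega), nsmul_eq_mul,
      show #A - (j + m) = k + 2 - j by omega]
    rfl
  have hdesc : ∀ j, 0 < ((j + m).descFactorial m : ℝ) := fun j =>
    Nat.cast_pos.2 (Nat.descFactorial_pos.2 (by omega))
  have := (Splits.prod (s := A) fun i _ => Splits.X_add_C (z i)).iterate_derivative_real m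
    |>.two_mul_coeff_zero_mul_coeff_two_le
  rw [hcoeff 0 (by omega), Nat.sub_zero, hcoeff 1 (by omega), show k + 2 - 1 = k + 1 by omega,
    h, mul_zero, hcoeff 2 (by omega), show k + 2 - 2 = k by omega] at this
  nlinarith [mul_pos (hdesc 0) (hdesc 2)]

variable [DecidableEq ι]

theorem elemSym_insert {a : ι} (ha : a ∉ A) (k : ℕ) (z : ι → ℝ) :
    elemSym (insert a A) (k + 1) z = elemSym A (k + 1) z + z a * elemSym A k z := by
  simp only [elemSym_eq_esymm, insert_val_of_notMem ha, Multiset.map_cons, Multiset.esymm_cons]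

theorem elemSym_erase {i : ι} (hi : i ∈ A) (k : ℕ) (z : ι → ℝ) :
    elemSym A (k + 1) z = elemSym (A.erase i) (k + 1) z + z i * elemSym (A.erase i) k z := by
  conv_lhs => rw [← insert_erase hi]
  exact elemSym_insert (notMem_erase i A) k z

/-- Euler's relation, as `∂ elemSym A (k + 1) z / ∂ z i = elemSym (A.erase i) k z`. -/
theorem succ_mul_elemSym_succ (A : Finset ι) (k : ℕ) (z : ι → ℝ) :
    (k + 1 : ℝ) * elemSym A (k + 1) z = ∑ i ∈ A, z i * elemSym (A.erase i) k z := by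
  induction A using Finset.induction generalizing k with
  | empty => rw [sum_empty, elemSym_of_card_lt (by simp), mul_zero]
  | insert a B ha ih =>
    have herase : ∀ i ∈ B, (insert a B).erase i = insert a (B.erase i) := fun i hi =>
      erase_insert_of_ne (ne_of_mem_of_not_mem hi ha).symm
    rw [sum_insert ha, erase_insert ha, sum_congr rfl fun i hi => by rw [herase i hi]]
    rcases k with _ | k
    · simp [elemSym_insert ha, elemSym_one]
      ring
    · simp only [elemSym_insert (fun h => ha (mem_of_mem_erase h)), mul_add, sum_add_distrib,
        elemSym_insert ha, mul_left_comm _ (z a), ← mul_sum, ← ih]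
      push_cast
      ring

theorem elemSym_inv (hk : k ≤ #A) (hz : ∀ i ∈ A, z i ≠ 0) :
    elemSym A k (fun i => (z i)⁻¹) = (∏ i ∈ A, z i)⁻¹ * elemSym A (#A - k) z := by
  rw [elemSym, elemSym, mul_sum]
  refine sum_nbij' (A \ ·) (A \ ·) (fun s hs => ?_) (fun t ht => ?_) (fun s hs => ?_)
    (fun t ht => ?_) (fun s hs => ?_)
  · rw [mem_powersetCard] at hs ⊢
    exact ⟨sdiff_subset, by rw [card_sdiff_of_subset hs.1, hs.2]⟩
  · rw [mem_powersetCard] at ht ⊢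
    exact ⟨sdiff_subset, by rw [card_sdiff_of_subset ht.1, ht.2]; omega⟩
  · exact Finset.sdiff_sdiff_eq_self (mem_powersetCard.1 hs).1
  · exact Finset.sdiff_sdiff_eq_self (mem_powersetCard.1 ht).1
  · have hsA := (mem_powersetCard.1 hs).1
    have hne : ∏ i ∈ A \ s, z i ≠ 0 := prod_ne_zero_iff.2 fun i hi => hz i (mem_sdiff.1 hi).1
    rw [prod_inv_distrib, ← prod_sdiff hsA, mul_inv]
    field_simp

end ElementarySymmetric

section GardingCone

variable {ι : Type*} {A : Finset ι} {k : ℕ} {z : ι → ℝ}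

def gardingCone (A : Finset ι) (k : ℕ) : Set (ι → ℝ) :=
  {z | ∀ j ≤ k, 0 < elemSym A j z}

theorem gardingCone_anti {k' : ℕ} (h : k' ≤ k) : gardingCone A k ⊆ gardingCone A k' :=
  fun _ hz j hj => hz j (hj.trans h)

theorem mem_gardingCone_succ :
    z ∈ gardingCone A (k + 1) ↔ z ∈ gardingCone A k ∧ 0 < elemSym A (k + 1) z :=
  ⟨fun hz => ⟨gardingCone_anti k.le_succ hz, hz _ le_rfl⟩, fun ⟨hz, hk⟩ j hj =>
    (Nat.le_succ_iff.1 hj).elim (hz j) fun h => h ▸ hk⟩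

theorem card_le_of_mem_gardingCone (hz : z ∈ gardingCone A k) : k ≤ #A :=
  not_lt.1 fun h => (hz k le_rfl).ne' (elemSym_of_card_lt h z)

theorem smul_mem_gardingCone {c : ℝ} (hc : 0 < c) (hz : z ∈ gardingCone A k) :
    c • z ∈ gardingCone A k := fun j hj => by
  rw [elemSym_smul]
  exact mul_pos (pow_pos hc j) (hz j hj)

theorem elemSym_add_const_ge (hz : z ∈ gardingCone A k) (hk : k + 1 ≤ #A) {s : ℝ}
    (hs : 0 ≤ s) :
    elemSym A (k + 1) z + ((#A).choose (k + 1) : ℝ) * s ^ (k + 1) ≤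
      elemSym A (k + 1) (fun i => z i + s) := by
  rw [elemSym_add_const hk, sum_range_succ, sum_range_succ']
  have hmid : 0 ≤ ∑ m ∈ range k,
      ((#A - (m + 1)).choose (k + 1 - (m + 1)) : ℝ) * s ^ (k + 1 - (m + 1)) *
        elemSym A (m + 1) z :=
    sum_nonneg fun m hm => by
      have := hz (m + 1) (mem_range.1 hm)
      positivity
  simp only [Nat.sub_self, Nat.choose_zero_right, Nat.sub_zero, pow_zero, elemSym_zero,
    Nat.cast_one, one_mul, mul_one]
  linarith

theorem add_const_mem_gardingCone (hz : z ∈ gardingCone A k) {s : ℝ} (hs : 0 ≤ s) :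
    (fun i => z i + s) ∈ gardingCone A k := by
  rintro (_ | j) hj
  · simp
  have := elemSym_add_const_ge (gardingCone_anti (by omega) hz)
    ((by omega : j + 1 ≤ k).trans (card_le_of_mem_gardingCone hz)) hs
  have : 0 ≤ ((#A).choose (j + 1) : ℝ) * s ^ (j + 1) := by positivity
  linarith [hz (j + 1) hj]

theorem exists_elemSym_add_const_pos (hz : z ∈ gardingCone A k) (hk : k + 1 ≤ #A) :
    ∃ s, 0 ≤ s ∧ 0 < elemSym A (k + 1) (fun i => z i + s) := by
  set s := 1 + |elemSym A (k + 1) z|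
  have hs : 1 ≤ s := le_add_of_nonneg_right (abs_nonneg _)
  have hchoose : (1 : ℝ) ≤ (#A).choose (k + 1) := Nat.one_le_cast.2 (Nat.choose_pos hk)
  have hpow : s ≤ s ^ (k + 1) := le_self_pow₀ hs (Nat.succ_ne_zero k)
  refine ⟨s, by positivity, lt_of_lt_of_le ?_ (elemSym_add_const_ge hz hk (by positivity))⟩
  nlinarith [neg_abs_le (elemSym A (k + 1) z)]

theorem mem_gardingCone_erase [DecidableEq ι] {i : ι} (hi : i ∈ A) :
    ∀ {k : ℕ} {z : ι → ℝ}, z ∈ gardingCone A (k + 1) → z ∈ gardingCone (A.erase i) k := by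
  intro k
  induction k with
  | zero => intro z _ j hj; simp [Nat.le_zero.1 hj]
  | succ k ih =>
    intro z hz
    have hzk := ih (gardingCone_anti k.succ.le_succ hz)
    refine mem_gardingCone_succ.2 ⟨hzk, ?_⟩
    by_contra! hle
    have hcard : k + 1 ≤ #(A.erase i) := by
      have := card_le_of_mem_gardingCone hz
      rw [card_erase_of_mem hi]
      omega
    -- Move `z` along `(1, …, 1)` until `elemSym (A.erase i) (k + 1)` vanishes; `Γ_{k+2}` is
    -- stable under this motion, and Newton's inequality rules out the resulting sign pattern.
    obtain ⟨s, hs, hpos⟩ := exists_elemSym_add_const_pos hzk hcard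
    obtain ⟨t, ⟨ht, -⟩, hroot⟩ := intermediate_value_Icc hs
      ((continuous_elemSym _ _).comp
        (by fun_prop : Continuous fun t : ℝ => fun l => z l + t)).continuousOn
      (show (0 : ℝ) ∈ Set.Icc _ _ from ⟨by simpa using hle, hpos.le⟩)
    simp only [Function.comp_apply] at hroot
    have hw := add_const_mem_gardingCone hz ht
    have htop : 0 < elemSym (A.erase i) (k + 2) (fun l => z l + t) := by
      have := elemSym_erase hi (k + 1) (fun l => z l + t)
      rw [hroot, mul_zero, add_zero] at this
      exact this ▸ hw _ le_rfl
    have hbot := ih (gardingCone_anti (by omega) hw) k le_rfl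
    exact absurd (mul_pos htop hbot) (not_lt.2 (elemSym_add_two_mul_elemSym_nonpos hroot))

end GardingCone

noncomputable def parallelSum (a b : ℝ) : ℝ :=
  a * b / (a + b)

theorem parallelSum_add_le {a₁ a₂ b₁ b₂ : ℝ} (h₁ : 0 < a₁ + b₁) (h₂ : 0 < a₂ + b₂) :
    parallelSum a₁ b₁ + parallelSum a₂ b₂ ≤ parallelSum (a₁ + a₂) (b₁ + b₂) := by
  unfold parallelSum
  rw [div_add_div _ _ h₁.ne' h₂.ne', div_le_div_iff₀ (by positivity) (by linarith)]
  nlinarith [sq_nonneg (b₁ * a₂ - b₂ * a₁), mul_pos h₁ h₂]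

theorem parallelSum_le_parallelSum_right {a b b' : ℝ} (h : 0 < a + b) (hb : b ≤ b') :
    parallelSum a b ≤ parallelSum a b' := by
  unfold parallelSum
  rw [div_le_div_iff₀ h (by linarith)]
  nlinarith [sq_nonneg a]

theorem concaveOn_of_superadditive {E : Type*} [AddCommGroup E] [Module ℝ E] {s : Set E}
    {f : E → ℝ} (hs_smul : ∀ x ∈ s, ∀ c : ℝ, 0 < c → c • x ∈ s)
    (hf_smul : ∀ x ∈ s, ∀ c : ℝ, 0 < c → f (c • x) = c * f x)
    (hs_add : ∀ x ∈ s, ∀ y ∈ s, x + y ∈ s)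
    (hf_add : ∀ x ∈ s, ∀ y ∈ s, f x + f y ≤ f (x + y)) :
    ConcaveOn ℝ s f := by
  have key : ∀ x ∈ s, ∀ y ∈ s, ∀ a b : ℝ, 0 ≤ a → 0 ≤ b → a + b = 1 →
      a • x + b • y ∈ s ∧ a • f x + b • f y ≤ f (a • x + b • y) := by
    intro x hx y hy a b ha hb hab
    rcases ha.eq_or_lt with rfl | ha
    · obtain rfl : b = 1 := by linarith
      simpa using hy
    rcases hb.eq_or_lt with rfl | hb
    · obtain rfl : a = 1 := by linarith
      simpa using hx
    refine ⟨hs_add _ (hs_smul x hx a ha) _ (hs_smul y hy b hb), ?_⟩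
    rw [smul_eq_mul, smul_eq_mul, ← hf_smul x hx a ha, ← hf_smul y hy b hb]
    exact hf_add _ (hs_smul x hx a ha) _ (hs_smul y hy b hb)
  exact ⟨fun x hx y hy a b ha hb hab => (key x hx y hy a b ha hb hab).1,
    fun x hx y hy a b ha hb hab => (key x hx y hy a b ha hb hab).2⟩

section Ratio

variable {ι : Type*} {A : Finset ι} {k : ℕ} {z : ι → ℝ}

noncomputable def elemSymRatio (A : Finset ι) (k : ℕ) (z : ι → ℝ) : ℝ :=
  elemSym A (k + 1) z / elemSym A k z

theorem elemSymRatio_pos (hz : z ∈ gardingCone A (k + 1)) : 0 < elemSymRatio A k z :=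
  div_pos (hz _ le_rfl) (hz _ k.le_succ)

theorem elemSymRatio_smul {c : ℝ} (hc : c ≠ 0) (A : Finset ι) (k : ℕ) (z : ι → ℝ) :
    elemSymRatio A k (c • z) = c * elemSymRatio A k z := by
  rw [elemSymRatio, elemSymRatio, elemSym_smul, elemSym_smul, pow_succ, mul_comm (c ^ k) c,
    mul_assoc, mul_div_assoc, mul_div_mul_left _ _ (pow_ne_zero k hc)]

variable [DecidableEq ι]

theorem elemSymRatio_inv (hk : k + 1 ≤ #A) (hz : ∀ i ∈ A, z i ≠ 0) :
    elemSymRatio A k (fun i => (z i)⁻¹) = (elemSymRatio A (#A - (k + 1)) z)⁻¹ := by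
  have hP : (∏ i ∈ A, z i)⁻¹ ≠ 0 := inv_ne_zero (prod_ne_zero_iff.2 hz)
  rw [elemSymRatio, elemSymRatio, elemSym_inv hk hz, elemSym_inv (by omega) hz,
    mul_div_mul_left _ _ hP, inv_div, show #A - (k + 1) + 1 = #A - k by omega]

theorem add_elemSymRatio_erase {i : ι} (hi : i ∈ A) (h : elemSym (A.erase i) k z ≠ 0) :
    z i + elemSymRatio (A.erase i) k z = elemSym A (k + 1) z / elemSym (A.erase i) k z := by
  rw [elemSymRatio, elemSym_erase hi]
  field_simp
  ring

theorem parallelSum_elemSymRatio_erase {i : ι} (hi : i ∈ A) (h : elemSym (A.erase i) k z ≠ 0) :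
    parallelSum (z i) (elemSymRatio (A.erase i) k z) =
      z i * elemSym (A.erase i) (k + 1) z / elemSym A (k + 1) z := by
  rw [parallelSum, add_elemSymRatio_erase hi h, elemSymRatio]
  field_simp

theorem succ_mul_elemSymRatio_succ (hz : z ∈ gardingCone A (k + 1)) :
    (k + 2 : ℝ) * elemSymRatio A (k + 1) z =
      ∑ i ∈ A, parallelSum (z i) (elemSymRatio (A.erase i) k z) := by
  rw [elemSymRatio, ← mul_div_assoc, show (k + 2 : ℝ) = (k + 1 : ℕ) + 1 by push_cast; ring,
    succ_mul_elemSym_succ, sum_div]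
  refine sum_congr rfl fun i hi => ?_
  rw [parallelSum_elemSymRatio_erase hi (mem_gardingCone_erase hi hz k le_rfl).ne']

theorem elemSymRatio_superadditive (k : ℕ) {A : Finset ι} {z w : ι → ℝ}
    (hz : z ∈ gardingCone A (k + 1)) (hw : w ∈ gardingCone A (k + 1)) :
    z + w ∈ gardingCone A (k + 1) ∧
      elemSymRatio A k z + elemSymRatio A k w ≤ elemSymRatio A k (z + w) := by
  induction k generalizing A z w with
  | zero =>
    have hsum : elemSymRatio A 0 (z + w) = elemSymRatio A 0 z + elemSymRatio A 0 w := by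
      simp [elemSymRatio, elemSym_one, sum_add_distrib]
    refine ⟨mem_gardingCone_succ.2 ⟨fun j hj => by simp [Nat.le_zero.1 hj], ?_⟩, hsum.ge⟩
    have := hsum ▸ add_pos (elemSymRatio_pos hz) (elemSymRatio_pos hw)
    simpa [elemSymRatio] using this
  | succ k ih =>
    have hz' := gardingCone_anti k.succ.le_succ hz
    have hw' := gardingCone_anti k.succ.le_succ hw
    have hzw := (ih hz' hw').1
    have hpos : ∀ v ∈ gardingCone A (k + 1), ∀ i ∈ A, 0 < v i + elemSymRatio (A.erase i) k v :=
      fun v hv i hi => by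
        have hvi := mem_gardingCone_erase hi hv k le_rfl
        rw [add_elemSymRatio_erase hi hvi.ne']
        exact div_pos (hv _ le_rfl) hvi
    have hlocal : ∀ i ∈ A, parallelSum (z i) (elemSymRatio (A.erase i) k z) +
        parallelSum (w i) (elemSymRatio (A.erase i) k w) ≤
          parallelSum ((z + w) i) (elemSymRatio (A.erase i) k (z + w)) := fun i hi => by
      have hzi := hpos z hz' i hi
      have hwi := hpos w hw' i hi
      calc _ ≤ parallelSum (z i + w i) (elemSymRatio (A.erase i) k z +
              elemSymRatio (A.erase i) k w) := parallelSum_add_le hzi hwi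
        _ ≤ _ := parallelSum_le_parallelSum_right (by linarith)
            (ih (mem_gardingCone_erase hi hz) (mem_gardingCone_erase hi hw)).2
    have hle : elemSymRatio A (k + 1) z + elemSymRatio A (k + 1) w ≤
        elemSymRatio A (k + 1) (z + w) := by
      refine le_of_mul_le_mul_left ?_ (by positivity : (0 : ℝ) < k + 2)
      rw [mul_add, succ_mul_elemSymRatio_succ hz', succ_mul_elemSymRatio_succ hw',
        succ_mul_elemSymRatio_succ hzw, ← sum_add_distrib]
      exact sum_le_sum hlocal
    refine ⟨mem_gardingCone_succ.2 ⟨hzw, ?_⟩, hle⟩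
    have := (add_pos (elemSymRatio_pos hz) (elemSymRatio_pos hw)).trans_le hle
    exact (div_pos_iff_of_pos_right (hzw _ le_rfl)).1 this

theorem concaveOn_elemSymRatio (A : Finset ι) (k : ℕ) :
    ConcaveOn ℝ (gardingCone A (k + 1)) (elemSymRatio A k) :=
  concaveOn_of_superadditive (fun _ hx _ hc => smul_mem_gardingCone hc hx)
    (fun _ _ _ hc => elemSymRatio_smul hc.ne' A k _)
    (fun _ hx _ hy => (elemSymRatio_superadditive k hx hy).1)
    (fun _ hx _ hy => (elemSymRatio_superadditive k hx hy).2)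

end Ratio

theorem Esym_pos_iff {n j : ℕ} {x : Fin n → ℝ} : 0 < Esym n j x ↔ 0 < elemSym univ j x := by
  obtain hj | hj := le_or_gt j n
  · exact mul_pos_iff_of_pos_left (inv_pos.2 (Nat.cast_pos.2 (Nat.choose_pos hj)))
  · change 0 < _ * elemSym univ j x ↔ _
    rw [elemSym_of_card_lt (by simpa using hj), mul_zero]

theorem GammaPlus_eq_gardingCone (n k : ℕ) : GammaPlus n k = gardingCone univ k := by
  ext x
  simp only [GammaPlus, gardingCone, Set.mem_ofPred_eq, Esym_pos_iff]
  refine ⟨fun h j hj => ?_, fun h i _ hi => h i hi⟩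
  rcases j with _ | j
  · simp
  · exact h _ (Nat.succ_pos j) hj

theorem Fquot_succ (n k : ℕ) (x : Fin n → ℝ) :
    Fquot n (k + 1) x =
      ((n.choose (k + 1) : ℝ)⁻¹ / (n.choose k : ℝ)⁻¹) * elemSymRatio univ k x := by
  rw [Fquot, Nat.add_sub_cancel]
  exact mul_div_mul_comm _ _ _ _

theorem concaveOn_Fquot_succ (n k : ℕ) :
    ConcaveOn ℝ (GammaPlus n (k + 1)) (Fquot n (k + 1)) := by
  rw [GammaPlus_eq_gardingCone]
  exact ((concaveOn_elemSymRatio univ k).smul (by positivity)).congr fun x _ =>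
    (Fquot_succ n k x).symm

theorem inv_Fquot_succ_inv {n k : ℕ} (hk : k + 1 ≤ n) {κ : Fin n → ℝ} (hκ : ∀ i, 0 < κ i) :
    (Fquot n (k + 1) fun i => (κ i)⁻¹)⁻¹ =
      ((n.choose (k + 1) : ℝ)⁻¹ / (n.choose k : ℝ)⁻¹)⁻¹ *
        elemSymRatio univ (n - (k + 1)) κ := by
  rw [Fquot_succ, elemSymRatio_inv (by simpa) fun i _ => (hκ i).ne', card_univ,
    Fintype.card_fin, mul_inv, inv_inv]

theorem concaveOn_inv_Fquot_inv_succ {n k : ℕ} (hk : k + 1 ≤ n) :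
    ConcaveOn ℝ {κ : Fin n → ℝ | (∀ i, 0 < κ i) ∧ (fun i => (κ i)⁻¹) ∈ GammaPlus n (k + 1)}
      (fun κ => (Fquot n (k + 1) fun i => (κ i)⁻¹)⁻¹) := by
  have hset : {κ : Fin n → ℝ | (∀ i, 0 < κ i) ∧ (fun i => (κ i)⁻¹) ∈ GammaPlus n (k + 1)} =
      Set.univ.pi fun _ => Set.Ioi 0 := by
    ext κ
    simp only [Set.mem_ofPred_eq, Set.mem_pi, Set.mem_univ, Set.mem_Ioi, true_implies,
      GammaPlus_eq_gardingCone, and_iff_left_iff_imp]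
    exact fun hκ j hj => elemSym_pos (by simp; omega) fun i _ => inv_pos.2 (hκ i)
  have hsub : (Set.univ.pi fun _ : Fin n => Set.Ioi (0 : ℝ)) ⊆
      gardingCone univ (n - (k + 1) + 1) := by
    intro κ hκ j hj
    exact elemSym_pos (by simp; omega) fun i _ => hκ i trivial
  rw [hset]
  exact (((concaveOn_elemSymRatio univ (n - (k + 1))).subset hsub
    (convex_pi fun _ _ => convex_Ioi 0)).smul (by positivity)).congr fun κ hκ =>
      (inv_Fquot_succ_inv hk fun i => hκ i trivial).symm

/-- `F = E_k/E_{k-1}` is concave on `Γ_k^+`, and inverse concave: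
`F_*(κ) = F(κ₁⁻¹,…,κₙ⁻¹)⁻¹` is concave on `{κ : ∀ i, κ i > 0, κ⁻¹ ∈ Γ_k^+}`. -/
theorem statement7 (n k : ℕ) (hk1 : 1 ≤ k) (hkn : k ≤ n) :
    ConcaveOn ℝ (GammaPlus n k) (Fquot n k) ∧
      ConcaveOn ℝ {κ : Fin n → ℝ | (∀ i, 0 < κ i) ∧ (fun i => (κ i)⁻¹) ∈ GammaPlus n k}
        (fun κ => (Fquot n k fun i => (κ i)⁻¹)⁻¹) := by
  obtain ⟨k, rfl⟩ := Nat.exists_eq_add_of_le' hk1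
  exact ⟨concaveOn_Fquot_succ n k, concaveOn_inv_Fquot_inv_succ hkn⟩
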